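/- Let q ≥ 3 be an integer and let 0 ≤ β < q/2. Define s^♯(β) = inf{s ∈ (1/q, 1] : D_β(s) ≥ 0} and s*(β) = sup{s ∈ [1/q, 1) : (d/ds) D_β(s) = 0}, where in each case the value is 1 if the corresponding set is empty. Then the following are equivalent: (a) s^♯(β) = 1; (b) D_β has no zeros in (1/q, 1]; (c) D_β(s*(β)) < 0. -/

import Mathlib

/-!
Since `D_β(1/q) = 0` and `D_β(1) < 0`, the intermediate value theorem shows that `D_β` has no
zero in `(1/q, 1]` iff it is negative there, i.e. iff `s^♯(β) = 1`; and as `D_β'(1/q) < 0` for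
`β < q/2`, the point `s*(β)` lies in `(1/q, 1]`, where `D_β` is then negative.

Conversely, `D_β' = -1 + c w / (1 + w)^2` with `c = 2βq/(q-1)` and `w` a decreasing exponential
in `x`; as `{w | (1 + w)^2 ≤ c w}` is an interval, so is `{x | 0 ≤ D_β'(x)}`. If `D_β(s) = 0` with
`1/q < s < 1`, Rolle gives a critical point in `(1/q, s)`, so `s*(β)` is the last critical point
of `D_β` in `[1/q, 1)`. Between that first critical point and `s*(β)` we have `D_β' ≥ 0`, and past
`s*(β)` the derivative `D_β'` has no zero but is negative somewhere beyond `s`, since `D_β(1) < 0`.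
Either way `D_β(s*(β)) ≥ D_β(s) = 0`.
-/

/-- The drift function `D_β(x) = −x + (1 + (q−1) e^{2β(1−qx)/(q−1)})⁻¹`,
equivalently `−x + e^{2βx}/(e^{2βx} + (q−1)e^{2β(1−x)/(q−1)})`. -/
noncomputable def Dfun (q : ℕ) (β x : ℝ) : ℝ :=
  -x + (1 + ((q : ℝ) - 1) * Real.exp (2 * β * (1 - (q : ℝ) * x) / ((q : ℝ) - 1)))⁻¹

/-- The dynamical (spinodal) critical inverse temperature
`β_s(q) = sup {β ≥ 0 : D_β(x) ≠ 0 for all x ∈ (1/q,1)}`. -/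
noncomputable def betaS (q : ℕ) : ℝ :=
  sSup {β : ℝ | 0 ≤ β ∧ ∀ x ∈ Set.Ioo (1 / (q : ℝ)) 1, Dfun q β x ≠ 0}

open scoped Classical in
/-- `s^♯(β) = inf {s ∈ (1/q,1] : D_β(s) ≥ 0}`, with the convention that the
infimum of the empty set is `1`. -/
noncomputable def sSharp (q : ℕ) (β : ℝ) : ℝ :=
  if {s : ℝ | s ∈ Set.Ioc (1 / (q : ℝ)) 1 ∧ 0 ≤ Dfun q β s}.Nonempty then
    sInf {s : ℝ | s ∈ Set.Ioc (1 / (q : ℝ)) 1 ∧ 0 ≤ Dfun q β s}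
  else 1

open scoped Classical in
/-- `s*(β) = sup {s ∈ [1/q,1) : (d/ds) D_β(s) = 0}`, with the convention that
the supremum of the empty set is `1`. -/
noncomputable def sStar (q : ℕ) (β : ℝ) : ℝ :=
  if {s : ℝ | s ∈ Set.Ico (1 / (q : ℝ)) 1 ∧ deriv (fun x => Dfun q β x) s = 0}.Nonempty then
    sSup {s : ℝ | s ∈ Set.Ico (1 / (q : ℝ)) 1 ∧ deriv (fun x => Dfun q β x) s = 0}
  else 1

open Set

lemma ordConnected_setOf_one_add_sq_le_mul (c : ℝ) :
    OrdConnected {t : ℝ | (1 + t) ^ 2 ≤ c * t} := by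
  refine ⟨fun x hx y hy t ht => ?_⟩
  obtain ⟨hxt, hty⟩ := ht
  rcases hxt.eq_or_lt with rfl | hxt'
  · exact hx
  change (1 + x) ^ 2 ≤ c * x at hx
  change (1 + y) ^ 2 ≤ c * y at hy
  change (1 + t) ^ 2 ≤ c * t
  -- `(1 + t)^2 - c t` is convex, so it lies below its chord through `x` and `y`
  by_contra! h
  nlinarith [mul_pos (sub_pos.2 h) (sub_pos.2 (hxt'.trans_le hty)),
    mul_nonneg (sub_nonneg.2 hxt) (sub_nonneg.2 hy), mul_nonneg (sub_nonneg.2 hty) (sub_nonneg.2 hx),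
    mul_nonneg (mul_nonneg (sub_nonneg.2 hxt) (sub_nonneg.2 hty)) (sub_nonneg.2 (hxt.trans hty))]

lemma le_apply_of_isLUB_deriv_eq_zero {f : ℝ → ℝ} {a b c s m : ℝ} (hf : Differentiable ℝ f)
    (hf' : Continuous (deriv f)) (hP : OrdConnected {x | 0 ≤ deriv f x})
    (hc : c ∈ Icc a s) (hfc : deriv f c = 0) (hsb : s < b) (hfb : f b < f s)
    (hm : IsLUB {x | x ∈ Ico a b ∧ deriv f x = 0} m) : f s ≤ f m := by
  have hcm : c ≤ m := hm.1 ⟨⟨hc.1, hc.2.trans_lt hsb⟩, hfc⟩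
  have hfm : deriv f m = 0 :=
    closure_minimal (fun x hx => hx.2) (isClosed_eq hf' continuous_const)
      (hm.mem_closure ⟨c, ⟨hc.1, hc.2.trans_lt hsb⟩, hfc⟩)
  rcases le_or_gt s m with hsm | hms
  · have hmono : MonotoneOn f (Icc s m) :=
      monotoneOn_of_deriv_nonneg (convex_Icc s m) hf.continuous.continuousOn
        hf.differentiableOn fun x hx => by
          rw [interior_Icc] at hx
          exact hP.out (hfc.ge : 0 ≤ deriv f c) hfm.ge ⟨hc.2.trans hx.1.le, hx.2.le⟩
    exact hmono ⟨le_rfl, hsm⟩ ⟨hsm, le_rfl⟩ hsm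
  · obtain ⟨y, hy, hfy⟩ := exists_deriv_eq_slope f hsb hf.continuous.continuousOn
      hf.differentiableOn
    have hfy_neg : deriv f y < 0 := by
      rw [hfy]
      exact div_neg_of_neg_of_pos (by linarith) (by linarith)
    -- a point of `(m, s)` with positive slope would give, by the intermediate value theorem,
    -- a critical point between it and `y`, beyond `m`
    have hnonpos : ∀ x ∈ Ioo m s, deriv f x ≤ 0 := by
      intro x hx
      by_contra! hpos
      obtain ⟨z, hz, hfz⟩ := intermediate_value_Ioo' (hx.2.trans hy.1).le hf'.continuousOn
        ⟨hfy_neg, hpos⟩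
      have := hm.1 ⟨⟨by linarith [hz.1, hx.1, hc.1], hz.2.trans hy.2⟩, hfz⟩
      linarith [hz.1, hx.1]
    have hanti : AntitoneOn f (Icc m s) :=
      antitoneOn_of_deriv_nonpos (convex_Icc m s) hf.continuous.continuousOn
        hf.differentiableOn fun x hx => by
          rw [interior_Icc] at hx
          exact hnonpos x hx
    exact hanti ⟨le_rfl, hms.le⟩ ⟨hms.le, le_rfl⟩ hms.le

noncomputable def Dweight (q : ℕ) (β x : ℝ) : ℝ :=
  ((q : ℝ) - 1) * Real.exp (2 * β * (1 - (q : ℝ) * x) / ((q : ℝ) - 1))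

section Drift

variable {q : ℕ} {β : ℝ}

lemma Dfun_eq (x : ℝ) : Dfun q β x = -x + (1 + Dweight q β x)⁻¹ := rfl

lemma one_div_cast_lt_one (hq : 1 < q) : 1 / (q : ℝ) < 1 := by
  rw [div_lt_one (by positivity)]
  exact_mod_cast hq

lemma Dweight_pos (hq : 1 < q) (x : ℝ) : 0 < Dweight q β x := by
  have : (0 : ℝ) < q - 1 := by
    rw [sub_pos]
    exact_mod_cast hq
  unfold Dweight
  positivity

lemma Dweight_antitone (hq : 1 < q) (hβ : 0 ≤ β) : Antitone (Dweight q β) := by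
  have hq1 : (0 : ℝ) ≤ q - 1 := by
    rw [sub_nonneg]
    exact_mod_cast hq.le
  intro u v huv
  unfold Dweight
  gcongr

lemma hasDerivAt_Dfun (hq : 1 < q) (x : ℝ) :
    HasDerivAt (Dfun q β)
      (2 * β * q / (q - 1) * Dweight q β x / (1 + Dweight q β x) ^ 2 - 1) x := by
  have hw := Dweight_pos (β := β) hq x
  have hlin : HasDerivAt (fun x : ℝ => 2 * β * (1 - (q : ℝ) * x) / ((q : ℝ) - 1))
      (2 * β * -((q : ℝ) * 1) / ((q : ℝ) - 1)) x :=
    ((((hasDerivAt_id x).const_mul (q : ℝ)).const_sub 1).const_mul (2 * β)).div_const _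
  refine ((hasDerivAt_id x).neg.add
    (((hlin.exp.const_mul ((q : ℝ) - 1)).const_add 1).inv (by positivity))).congr_deriv ?_
  simp only [Dweight]
  ring

lemma differentiable_Dfun (hq : 1 < q) : Differentiable ℝ (Dfun q β) :=
  fun x => (hasDerivAt_Dfun hq x).differentiableAt

lemma continuous_deriv_Dfun (hq : 1 < q) : Continuous (deriv (Dfun q β)) := by
  have hw : Continuous (Dweight q β) := by
    unfold Dweight
    fun_prop
  rw [funext fun x => (hasDerivAt_Dfun (β := β) hq x).deriv]
  refine ((continuous_const.mul hw).div (by fun_prop) fun x => ?_).sub continuous_const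
  have := Dweight_pos (β := β) hq x
  positivity

lemma Dfun_one_div (hq : q ≠ 0) : Dfun q β (1 / q) = 0 := by
  rw [Dfun, mul_one_div_cancel (Nat.cast_ne_zero.2 hq)]
  norm_num

lemma Dfun_one_neg (hq : 1 < q) : Dfun q β 1 < 0 := by
  rw [Dfun_eq, neg_add_lt_iff_lt_add, add_zero]
  exact inv_lt_one_of_one_lt₀ (lt_add_of_pos_right 1 (Dweight_pos hq 1))

lemma deriv_Dfun_one_div_neg (hq : 1 < q) (hβ : β < q / 2) :
    deriv (Dfun q β) (1 / q) < 0 := by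
  have hq0 : (q : ℝ) ≠ 0 := by positivity
  have hq1 : (q : ℝ) - 1 ≠ 0 := by
    rw [sub_ne_zero]
    exact_mod_cast hq.ne'
  rw [(hasDerivAt_Dfun hq _).deriv, Dweight, mul_one_div_cancel hq0, sub_self, mul_zero,
    zero_div, Real.exp_zero, mul_one, add_sub_cancel, sub_neg,
    show 2 * β * q / (q - 1) * (q - 1) / (q : ℝ) ^ 2 = 2 * β / q by field_simp,
    div_lt_one (by positivity)]
  linarith

lemma ordConnected_setOf_deriv_Dfun_nonneg (hq : 1 < q) (hβ : 0 ≤ β) :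
    OrdConnected {x | 0 ≤ deriv (Dfun q β) x} := by
  have hset : {x | 0 ≤ deriv (Dfun q β) x} =
      Dweight q β ⁻¹' {t | (1 + t) ^ 2 ≤ 2 * β * q / (q - 1) * t} := by
    ext x
    have : 0 < (1 + Dweight q β x) ^ 2 := by
      have := Dweight_pos (β := β) hq x
      positivity
    rw [mem_ofPred_eq, (hasDerivAt_Dfun hq x).deriv, sub_nonneg, one_le_div this]
    rfl
  rw [hset]
  exact (ordConnected_setOf_one_add_sq_le_mul _).preimage_anti (Dweight_antitone hq hβ)

lemma Dfun_neg_of_forall_ne_zero (hq : 1 < q) (h : ∀ s ∈ Ioc (1 / (q : ℝ)) 1, Dfun q β s ≠ 0) :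
    ∀ s ∈ Ioc (1 / (q : ℝ)) 1, Dfun q β s < 0 := by
  intro s hs
  by_contra! hpos
  obtain ⟨z, hz, hz0⟩ := intermediate_value_Icc' hs.2
    (differentiable_Dfun (β := β) hq).continuous.continuousOn ⟨(Dfun_one_neg hq).le, hpos⟩
  exact h z ⟨hs.1.trans_le hz.1, hz.2⟩ hz0

lemma sSharp_eq_one_iff (hq : 1 < q) :
    sSharp q β = 1 ↔ ∀ s ∈ Ioc (1 / (q : ℝ)) 1, Dfun q β s ≠ 0 := by
  constructor
  · intro h s hs hs0
    have hs1 : s < 1 := hs.2.lt_of_ne (by rintro rfl; exact (Dfun_one_neg hq).ne hs0)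
    have hmem : s ∈ {s : ℝ | s ∈ Ioc (1 / (q : ℝ)) 1 ∧ 0 ≤ Dfun q β s} := ⟨hs, hs0.ge⟩
    have : sSharp q β ≤ s := by
      rw [sSharp, if_pos ⟨s, hmem⟩]
      exact csInf_le ⟨1 / q, fun x hx => hx.1.1.le⟩ hmem
    linarith
  · intro h
    rw [sSharp, if_neg]
    rintro ⟨s, hs, hs0⟩
    exact (Dfun_neg_of_forall_ne_zero hq h s hs).not_ge hs0

lemma sStar_mem_Ioc (hq : 1 < q) (hβ : β < q / 2) : sStar q β ∈ Ioc (1 / (q : ℝ)) 1 := by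
  unfold sStar
  split_ifs with hZ
  · obtain ⟨z, hz⟩ := hZ
    have hqz : 1 / q < z :=
      hz.1.1.lt_of_ne (by rintro rfl; exact (deriv_Dfun_one_div_neg hq hβ).ne hz.2)
    exact ⟨hqz.trans_le (le_csSup ⟨1, fun x hx => hx.1.2.le⟩ hz),
      csSup_le ⟨z, hz⟩ fun x hx => hx.1.2.le⟩
  · exact ⟨one_div_cast_lt_one hq, le_rfl⟩

lemma Dfun_sStar_nonneg_of_eq_zero (hq : 1 < q) (hβ : 0 ≤ β) {s : ℝ}
    (hs : s ∈ Ioc (1 / (q : ℝ)) 1) (hs0 : Dfun q β s = 0) : 0 ≤ Dfun q β (sStar q β) := by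
  have hs1 : s < 1 := hs.2.lt_of_ne (by rintro rfl; exact (Dfun_one_neg hq).ne hs0)
  obtain ⟨c, hc, hc0⟩ := exists_deriv_eq_zero hs.1 (differentiable_Dfun hq).continuous.continuousOn
    (by rw [Dfun_one_div (by omega), hs0])
  set Z := {x : ℝ | x ∈ Ico (1 / (q : ℝ)) 1 ∧ deriv (fun x => Dfun q β x) x = 0}
  have hcZ : c ∈ Z := ⟨⟨hc.1.le, hc.2.trans hs1⟩, hc0⟩
  have hstar : sStar q β = sSup Z := by rw [sStar, if_pos ⟨c, hcZ⟩]
  rw [hstar, ← hs0]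
  exact le_apply_of_isLUB_deriv_eq_zero (differentiable_Dfun hq) (continuous_deriv_Dfun hq)
    (ordConnected_setOf_deriv_Dfun_nonneg hq hβ) ⟨hc.1.le, hc.2.le⟩ hc0 hs1
    (hs0 ▸ Dfun_one_neg hq) (isLUB_csSup ⟨c, hcZ⟩ ⟨1, fun x hx => hx.1.2.le⟩)

end Drift

/-- (Proposition 3.1, part 3): for `q ≥ 3` and `0 ≤ β < q/2`, the following are
equivalent: (a) `s^♯(β) = 1`; (b) `D_β` has no zeros in `(1/q,1]`;
(c) `D_β(s*(β)) < 0`. -/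
theorem sSharp_sStar_tfae (q : ℕ) (hq : 3 ≤ q) (β : ℝ)
    (hβ0 : 0 ≤ β) (hβ : β < (q : ℝ) / 2) :
    (sSharp q β = 1 ↔ ∀ s ∈ Set.Ioc (1 / (q : ℝ)) 1, Dfun q β s ≠ 0) ∧
    ((∀ s ∈ Set.Ioc (1 / (q : ℝ)) 1, Dfun q β s ≠ 0) ↔ Dfun q β (sStar q β) < 0) := by
  have hq1 : 1 < q := by omega
  refine ⟨sSharp_eq_one_iff hq1, fun h => ?_, fun h s hs hs0 => ?_⟩
  · exact Dfun_neg_of_forall_ne_zero hq1 h _ (sStar_mem_Ioc hq1 hβ)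
  · exact (Dfun_sStar_nonneg_of_eq_zero hq1 hβ0 hs hs0).not_gt h
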